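/- Let R, S be rings, M an (R,S)-bimodule and N an (S,R)-bimodule with an (R,R)-bimodule isomorphism M ⊗[S] N ≅ R and an (S,S)-bimodule isomorphism N ⊗[R] M ≅ S. Then the additive functors G : L ↦ M ⊗[S] L from left S-modules to left R-modules and F : K ↦ N ⊗[R] K from left R-modules to left S-modules satisfy F ∘ G ≅ id and G ∘ F ≅ id naturally; in particular G and F are mutually quasi-inverse equivalences of categories. -/

import Mathlib

open scoped TensorProduct
open MulOpposite

namespace Paper

noncomputable section

/-- The subgroup of relators defining the balanced tensor product `M ⊗[S] N`
of a right `S`-module `M` and a left `S`-module `N`. -/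
def balRel (S : Type*) [Ring S] (M : Type*) [AddCommGroup M] [Module Sᵐᵒᵖ M]
    (N : Type*) [AddCommGroup N] [Module S N] : AddSubgroup (M ⊗[ℤ] N) :=
  AddSubgroup.closure
    {x | ∃ (m : M) (s : S) (n : N), x = (op s • m) ⊗ₜ[ℤ] n - m ⊗ₜ[ℤ] (s • n)}

/-- The balanced tensor product `M ⊗[S] N` of a right `S`-module `M` and a
left `S`-module `N`: the quotient of the tensor product `M ⊗[ℤ] N` of abelian
groups by the relations `(m • s) ⊗ n = m ⊗ (s • n)`. -/
def BalTensor (S : Type*) [Ring S] (M : Type*) [AddCommGroup M] [Module Sᵐᵒᵖ M]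
    (N : Type*) [AddCommGroup N] [Module S N] : Type _ :=
  (M ⊗[ℤ] N) ⧸ balRel S M N

instance (S : Type*) [Ring S] (M : Type*) [AddCommGroup M] [Module Sᵐᵒᵖ M]
    (N : Type*) [AddCommGroup N] [Module S N] : AddCommGroup (BalTensor S M N) :=
  QuotientAddGroup.Quotient.addCommGroup _

/-- The elementary tensor `m ⊗ n` in the balanced tensor product `M ⊗[S] N`. -/
def BalTensor.tmul (S : Type*) [Ring S] (M : Type*) [AddCommGroup M] [Module Sᵐᵒᵖ M]
    (N : Type*) [AddCommGroup N] [Module S N] (m : M) (n : N) : BalTensor S M N :=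
  QuotientAddGroup.mk (m ⊗ₜ[ℤ] n)


/-- The canonical projection onto the balanced tensor product. -/
def BalTensor.mk (S : Type*) [Ring S] (M : Type*) [AddCommGroup M] [Module Sᵐᵒᵖ M]
    (N : Type*) [AddCommGroup N] [Module S N] (x : M ⊗[ℤ] N) : BalTensor S M N :=
  QuotientAddGroup.mk x

/-- The left action of `r : R` on `M ⊗[ℤ] N` through the first factor. -/
def lsmulAux (R : Type*) [Ring R] (M : Type*) [AddCommGroup M] [Module R M]
    (N : Type*) [AddCommGroup N] (r : R) : M ⊗[ℤ] N →+ M ⊗[ℤ] N :=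
  (LinearMap.rTensor N ((DistribMulAction.toAddMonoidHom M r).toIntLinearMap)).toAddMonoidHom

/-- The right action of `t : Tᵐᵒᵖ` on `M ⊗[ℤ] N` through the second factor. -/
def rsmulAux (T : Type*) [Ring T] (M : Type*) [AddCommGroup M]
    (N : Type*) [AddCommGroup N] [Module Tᵐᵒᵖ N] (t : Tᵐᵒᵖ) : M ⊗[ℤ] N →+ M ⊗[ℤ] N :=
  (LinearMap.lTensor M ((DistribMulAction.toAddMonoidHom N t).toIntLinearMap)).toAddMonoidHom

section LeftAction

variable (R S : Type*) [Ring R] [Ring S]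
  (M : Type*) [AddCommGroup M] [Module R M] [Module Sᵐᵒᵖ M] [SMulCommClass R Sᵐᵒᵖ M]
  (N : Type*) [AddCommGroup N] [Module S N]

theorem lsmulAux_le (r : R) :
    balRel S M N ≤ (balRel S M N).comap (lsmulAux R M N r) := by
  rw [balRel, AddSubgroup.closure_le]
  rintro x ⟨m, s, n, rfl⟩
  simp only [SetLike.mem_coe, AddSubgroup.mem_comap, map_sub]
  have h1 : lsmulAux R M N r ((op s • m) ⊗ₜ[ℤ] n) = (op s • (r • m)) ⊗ₜ[ℤ] n := by
    simp [lsmulAux, LinearMap.rTensor_tmul, smul_comm]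
  have h2 : lsmulAux R M N r (m ⊗ₜ[ℤ] (s • n)) = (r • m) ⊗ₜ[ℤ] (s • n) := by
    simp [lsmulAux, LinearMap.rTensor_tmul]
  rw [h1, h2]
  exact AddSubgroup.subset_closure ⟨r • m, s, n, rfl⟩

instance : SMul R (BalTensor S M N) :=
  ⟨fun r => QuotientAddGroup.map _ _ (lsmulAux R M N r) (lsmulAux_le R S M N r)⟩

theorem BalTensor.lsmul_mk (r : R) (x : M ⊗[ℤ] N) :
    r • (BalTensor.mk S M N x) = BalTensor.mk S M N (lsmulAux R M N r x) := rfl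

instance : Module R (BalTensor S M N) where
  smul r x := r • x
  one_smul x := by
    induction x using QuotientAddGroup.induction_on with
    | H y =>
      show QuotientAddGroup.mk (lsmulAux R M N 1 y) = _
      congr 1
      induction y using TensorProduct.induction_on with
      | zero => simp
      | tmul m n => simp [lsmulAux]
      | add a b ha hb => simp only [map_add, ha, hb]
  mul_smul a b x := by
    induction x using QuotientAddGroup.induction_on with
    | H y =>
      show QuotientAddGroup.mk (lsmulAux R M N (a * b) y) =
        QuotientAddGroup.mk (lsmulAux R M N a (lsmulAux R M N b y))
      congr 1
      induction y using TensorProduct.induction_on with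
      | zero => simp
      | tmul m n => simp [lsmulAux, mul_smul]
      | add a' b' ha hb => simp only [map_add, ha, hb]
  smul_zero r := map_zero (QuotientAddGroup.map _ _ (lsmulAux R M N r) (lsmulAux_le R S M N r))
  smul_add r x y := map_add (QuotientAddGroup.map _ _ (lsmulAux R M N r) (lsmulAux_le R S M N r)) x y
  add_smul a b x := by
    induction x using QuotientAddGroup.induction_on with
    | H y =>
      show QuotientAddGroup.mk (lsmulAux R M N (a + b) y) =
        QuotientAddGroup.mk (lsmulAux R M N a y) + QuotientAddGroup.mk (lsmulAux R M N b y)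
      refine Eq.trans ?_ (QuotientAddGroup.mk_add _ _ _)
      congr 1
      induction y using TensorProduct.induction_on with
      | zero => simp
      | tmul m n => simp [lsmulAux, add_smul, TensorProduct.add_tmul]
      | add a' b' ha hb =>
        simp only [map_add, ha, hb]
        abel
  zero_smul x := by
    induction x using QuotientAddGroup.induction_on with
    | H y =>
      show QuotientAddGroup.mk (lsmulAux R M N (0 : R) y) = 0
      have : lsmulAux R M N (0 : R) y = 0 := by
        induction y using TensorProduct.induction_on with
        | zero => simp
        | tmul m n => simp [lsmulAux]
        | add a' b' ha hb => simp only [map_add, ha, hb]; abel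
      rw [this]
      rfl

theorem BalTensor.smul_tmul (r : R) (m : M) (n : N) :
    r • (BalTensor.tmul S M N m n) = BalTensor.tmul S M N (r • m) n := by
  show QuotientAddGroup.mk (lsmulAux R M N r (m ⊗ₜ[ℤ] n)) = _
  rw [BalTensor.tmul]
  congr 1

end LeftAction

section RightAction

variable (S T : Type*) [Ring S] [Ring T]
  (M : Type*) [AddCommGroup M] [Module Sᵐᵒᵖ M]
  (N : Type*) [AddCommGroup N] [Module S N] [Module Tᵐᵒᵖ N] [SMulCommClass S Tᵐᵒᵖ N]

theorem rsmulAux_le (t : Tᵐᵒᵖ) :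
    balRel S M N ≤ (balRel S M N).comap (rsmulAux T M N t) := by
  rw [balRel, AddSubgroup.closure_le]
  rintro x ⟨m, s, n, rfl⟩
  simp only [SetLike.mem_coe, AddSubgroup.mem_comap, map_sub]
  have h1 : rsmulAux T M N t ((op s • m) ⊗ₜ[ℤ] n) = (op s • m) ⊗ₜ[ℤ] (t • n) := by
    simp [rsmulAux, LinearMap.lTensor_tmul]
  have h2 : rsmulAux T M N t (m ⊗ₜ[ℤ] (s • n)) = m ⊗ₜ[ℤ] (s • (t • n)) := by
    simp [rsmulAux, LinearMap.lTensor_tmul, smul_comm]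
  rw [h1, h2]
  exact AddSubgroup.subset_closure ⟨m, s, t • n, rfl⟩

instance : SMul Tᵐᵒᵖ (BalTensor S M N) :=
  ⟨fun t => QuotientAddGroup.map _ _ (rsmulAux T M N t) (rsmulAux_le S T M N t)⟩

theorem BalTensor.rsmul_mk (t : Tᵐᵒᵖ) (x : M ⊗[ℤ] N) :
    t • (BalTensor.mk S M N x) = BalTensor.mk S M N (rsmulAux T M N t x) := rfl

instance : Module Tᵐᵒᵖ (BalTensor S M N) where
  smul t x := t • x
  one_smul x := by
    induction x using QuotientAddGroup.induction_on with
    | H y =>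
      show QuotientAddGroup.mk (rsmulAux T M N 1 y) = _
      congr 1
      induction y using TensorProduct.induction_on with
      | zero => simp
      | tmul m n => simp [rsmulAux]
      | add a b ha hb => simp only [map_add, ha, hb]
  mul_smul a b x := by
    induction x using QuotientAddGroup.induction_on with
    | H y =>
      show QuotientAddGroup.mk (rsmulAux T M N (a * b) y) =
        QuotientAddGroup.mk (rsmulAux T M N a (rsmulAux T M N b y))
      congr 1
      induction y using TensorProduct.induction_on with
      | zero => simp
      | tmul m n => simp [rsmulAux, mul_smul]
      | add a' b' ha hb => simp only [map_add, ha, hb]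
  smul_zero t := map_zero (QuotientAddGroup.map _ _ (rsmulAux T M N t) (rsmulAux_le S T M N t))
  smul_add t x y := map_add (QuotientAddGroup.map _ _ (rsmulAux T M N t) (rsmulAux_le S T M N t)) x y
  add_smul a b x := by
    induction x using QuotientAddGroup.induction_on with
    | H y =>
      show QuotientAddGroup.mk (rsmulAux T M N (a + b) y) =
        QuotientAddGroup.mk (rsmulAux T M N a y) + QuotientAddGroup.mk (rsmulAux T M N b y)
      refine Eq.trans ?_ (QuotientAddGroup.mk_add _ _ _)
      congr 1
      induction y using TensorProduct.induction_on with
      | zero => simp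
      | tmul m n => simp [rsmulAux, add_smul, TensorProduct.tmul_add]
      | add a' b' ha hb =>
        simp only [map_add, ha, hb]
        abel
  zero_smul x := by
    induction x using QuotientAddGroup.induction_on with
    | H y =>
      show QuotientAddGroup.mk (rsmulAux T M N (0 : Tᵐᵒᵖ) y) = 0
      have : rsmulAux T M N (0 : Tᵐᵒᵖ) y = 0 := by
        induction y using TensorProduct.induction_on with
        | zero => simp
        | tmul m n => simp [rsmulAux]
        | add a' b' ha hb => simp only [map_add, ha, hb]; abel
      rw [this]
      rfl

theorem BalTensor.tmul_smul (t : Tᵐᵒᵖ) (m : M) (n : N) :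
    t • (BalTensor.tmul S M N m n) = BalTensor.tmul S M N m (t • n) := by
  show QuotientAddGroup.mk (rsmulAux T M N t (m ⊗ₜ[ℤ] n)) = _
  rw [BalTensor.tmul]
  congr 1

end RightAction

section Bimodule

variable (R S T : Type*) [Ring R] [Ring S] [Ring T]
  (M : Type*) [AddCommGroup M] [Module R M] [Module Sᵐᵒᵖ M] [SMulCommClass R Sᵐᵒᵖ M]
  (N : Type*) [AddCommGroup N] [Module S N] [Module Tᵐᵒᵖ N] [SMulCommClass S Tᵐᵒᵖ N]

instance : SMulCommClass R Tᵐᵒᵖ (BalTensor S M N) where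
  smul_comm r t x := by
    induction x using QuotientAddGroup.induction_on with
    | H y =>
      show QuotientAddGroup.mk (lsmulAux R M N r (rsmulAux T M N t y)) =
        QuotientAddGroup.mk (rsmulAux T M N t (lsmulAux R M N r y))
      congr 1
      induction y using TensorProduct.induction_on with
      | zero => simp
      | tmul m n => simp [rsmulAux, lsmulAux]
      | add a b ha hb => simp only [map_add, ha, hb]

end Bimodule

end

end Paper

open Paper MulOpposite CategoryTheory

universe u

namespace Paper

noncomputable section

variable (R S : Type u) [Ring R] [Ring S]
  (M : Type u) [AddCommGroup M] [Module R M] [Module Sᵐᵒᵖ M] [SMulCommClass R Sᵐᵒᵖ M]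

/-- The map `id_M ⊗ f` on `M ⊗[ℤ] L` induced by an `S`-linear map `f`. -/
def mapAux {L L' : Type u} [AddCommGroup L] [AddCommGroup L'] [Module S L] [Module S L']
    (f : L →ₗ[S] L') : M ⊗[ℤ] L →+ M ⊗[ℤ] L' :=
  (LinearMap.lTensor M f.toAddMonoidHom.toIntLinearMap).toAddMonoidHom

theorem mapAux_le {L L' : Type u} [AddCommGroup L] [AddCommGroup L'] [Module S L]
    [Module S L'] (f : L →ₗ[S] L') :
    balRel S M L ≤ (balRel S M L').comap (mapAux S M f) := by
  rw [balRel, AddSubgroup.closure_le]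
  rintro x ⟨m, s, l, rfl⟩
  simp only [SetLike.mem_coe, AddSubgroup.mem_comap, map_sub]
  have h1 : mapAux S M f ((op s • m) ⊗ₜ[ℤ] l) = (op s • m) ⊗ₜ[ℤ] (f l) := by
    simp [mapAux]
  have h2 : mapAux S M f (m ⊗ₜ[ℤ] (s • l)) = m ⊗ₜ[ℤ] (s • f l) := by
    simp [mapAux]
  rw [h1, h2, balRel]
  exact AddSubgroup.subset_closure ⟨m, s, f l, rfl⟩

/-- The `R`-linear map `id_M ⊗ f : M ⊗[S] L → M ⊗[S] L'` induced by an `S`-linear map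
`f : L → L'`. -/
def tensorHom {L L' : Type u} [AddCommGroup L] [AddCommGroup L'] [Module S L] [Module S L']
    (f : L →ₗ[S] L') : BalTensor S M L →ₗ[R] BalTensor S M L' where
  toFun := QuotientAddGroup.map _ _ (mapAux S M f) (mapAux_le S M f)
  map_add' := map_add _
  map_smul' r x := by
    induction x using QuotientAddGroup.induction_on with
    | H y =>
      show QuotientAddGroup.mk (mapAux S M f (lsmulAux R M L r y)) =
        QuotientAddGroup.mk (lsmulAux R M L' r (mapAux S M f y))
      congr 1
      induction y using TensorProduct.induction_on with
      | zero => simp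
      | tmul m l => simp [mapAux, lsmulAux]
      | add a b ha hb => simp only [map_add, ha, hb]

/-- The additive functor `L ↦ M ⊗[S] L` from left `S`-modules to left `R`-modules
given by tensoring with an `(R,S)`-bimodule `M`. -/
def tensorFunctor : ModuleCat.{u} S ⥤ ModuleCat.{u} R where
  obj L := ModuleCat.of R (BalTensor S M L)
  map {L L'} f := ModuleCat.ofHom (tensorHom R S M f.hom)
  map_id L := by
    refine ModuleCat.hom_ext (LinearMap.ext fun x => ?_)
    induction x using QuotientAddGroup.induction_on with
    | H y =>
      show QuotientAddGroup.mk (mapAux S M (𝟙 L : L ⟶ L).hom y) = QuotientAddGroup.mk y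
      congr 1
      induction y using TensorProduct.induction_on with
      | zero => simp
      | tmul m l => simp [mapAux]
      | add a b ha hb => simp only [map_add, ha, hb]
  map_comp {L L' L''} f g := by
    refine ModuleCat.hom_ext (LinearMap.ext fun x => ?_)
    induction x using QuotientAddGroup.induction_on with
    | H y =>
      show QuotientAddGroup.mk (mapAux S M (f ≫ g).hom y) =
        QuotientAddGroup.mk (mapAux S M g.hom (mapAux S M f.hom y))
      congr 1
      induction y using TensorProduct.induction_on with
      | zero => simp
      | tmul m l => simp [mapAux]
      | add a b ha hb => simp only [map_add, ha, hb]

end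

end Paper

/-! Given the `(B,B)`-isomorphism `e : N ⊗[A] M ≃ B`, every left `B`-module `L` is recovered from
`N ⊗[A] (M ⊗[B] L)`: contraction `n ⊗ (m ⊗ l) ↦ e (n ⊗ m) • l` has inverse
`l ↦ (id_N ⊗ (- ⊗ l)) (e⁻¹ 1)`. The inverse is `B`-linear because `b • e⁻¹ 1 = e⁻¹ b = e⁻¹ 1 • b`,
and the two composites reduce to `e (e⁻¹ 1) = 1` and to `e⁻¹ 1 • e (n ⊗ m) = n ⊗ m`.
The resulting isomorphisms are natural in `L`, so applying this to both `N ⊗[R] M ≃ S` and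
`M ⊗[S] N ≃ R` exhibits the two tensor functors as quasi-inverse. -/

namespace Paper

noncomputable section

namespace BalTensor

variable {S : Type*} [Ring S] {M : Type*} [AddCommGroup M] [Module Sᵐᵒᵖ M]
  {N : Type*} [AddCommGroup N] [Module S N] {P : Type*} [AddCommGroup P]

theorem tmul_add_left (m m' : M) (n : N) :
    tmul S M N (m + m') n = tmul S M N m n + tmul S M N m' n :=
  congrArg QuotientAddGroup.mk (TensorProduct.add_tmul m m' n)

theorem tmul_add_right (m : M) (n n' : N) :
    tmul S M N m (n + n') = tmul S M N m n + tmul S M N m n' :=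
  congrArg QuotientAddGroup.mk (TensorProduct.tmul_add m n n')

theorem op_smul_tmul (m : M) (s : S) (n : N) :
    tmul S M N (op s • m) n = tmul S M N m (s • n) :=
  (QuotientAddGroup.eq_iff_sub_mem).2 (AddSubgroup.subset_closure ⟨m, s, n, rfl⟩)

@[elab_as_elim]
theorem induction_on {C : BalTensor S M N → Prop} (x : BalTensor S M N) (zero : C 0)
    (tmul : ∀ m n, C (tmul S M N m n)) (add : ∀ x y, C x → C y → C (x + y)) : C x :=
  QuotientAddGroup.induction_on x fun y =>
    TensorProduct.induction_on y zero tmul fun _ _ hp hq => add _ _ hp hq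

theorem addHom_ext {f g : BalTensor S M N →+ P}
    (h : ∀ m n, f (tmul S M N m n) = g (tmul S M N m n)) : f = g := by
  ext x
  induction x using induction_on with
  | zero => simp only [map_zero]
  | tmul m n => exact h m n
  | add x y hx hy => simp only [map_add, hx, hy]

def tmulAddHom (m : M) : N →+ BalTensor S M N :=
  AddMonoidHom.mk' (tmul S M N m) (tmul_add_right (S := S) m)

theorem tmul_zero_right (m : M) : tmul S M N m 0 = 0 :=
  map_zero (tmulAddHom m)

def lift (f : M →+ N →+ P) (hf : ∀ (m : M) (s : S) (n : N), f (op s • m) n = f m (s • n)) :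
    BalTensor S M N →+ P :=
  QuotientAddGroup.lift (balRel S M N)
    (TensorProduct.liftAddHom f fun k m n => by
      rw [map_zsmul, AddMonoidHom.smul_apply, map_zsmul])
    (by
      rw [balRel, AddSubgroup.closure_le]
      rintro _ ⟨m, s, n, rfl⟩
      simp [hf])

@[simp]
theorem lift_tmul (f : M →+ N →+ P) (hf : ∀ (m : M) (s : S) (n : N), f (op s • m) n = f m (s • n))
    (m : M) (n : N) :
    lift f hf (tmul S M N m n) = f m n :=
  rfl

variable {R : Type*} [Ring R] [Module R M] [SMulCommClass R Sᵐᵒᵖ M]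

theorem linearMap_ext [Module R P] {f g : BalTensor S M N →ₗ[R] P}
    (h : ∀ m n, f (tmul S M N m n) = g (tmul S M N m n)) : f = g :=
  LinearMap.toAddMonoidHom_injective (addHom_ext h)

variable (S) in
def tmulRight (n : N) : M →ₗ[R] BalTensor S M N where
  toFun m := tmul S M N m n
  map_add' m m' := tmul_add_left m m' n
  map_smul' r m := (smul_tmul R S M N r m n).symm

theorem tmulRight_add (n n' : N) :
    tmulRight (R := R) (M := M) S (n + n') = tmulRight S n + tmulRight S n' :=
  LinearMap.ext fun m => tmul_add_right m n n'

end BalTensor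

section TensorHom

variable {R S : Type u} [Ring R] [Ring S]
  {M : Type u} [AddCommGroup M] [Module R M] [Module Sᵐᵒᵖ M] [SMulCommClass R Sᵐᵒᵖ M]
  {L L' L'' : Type u} [AddCommGroup L] [AddCommGroup L'] [AddCommGroup L'']
  [Module S L] [Module S L'] [Module S L'']

@[simp]
theorem tensorHom_tmul (f : L →ₗ[S] L') (m : M) (l : L) :
    tensorHom R S M f (BalTensor.tmul S M L m l) = BalTensor.tmul S M L' m (f l) := rfl

theorem tensorHom_add (f g : L →ₗ[S] L') :
    tensorHom R S M (f + g) = tensorHom R S M f + tensorHom R S M g :=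
  BalTensor.linearMap_ext fun m l => by simp [BalTensor.tmul_add_right]

theorem tensorHom_comp (f : L →ₗ[S] L') (g : L' →ₗ[S] L'') :
    tensorHom R S M (g ∘ₗ f) = tensorHom R S M g ∘ₗ tensorHom R S M f :=
  BalTensor.linearMap_ext fun _ _ => rfl

theorem tensorHom_comp_tmulRight (f : L →ₗ[S] L') (l : L) :
    tensorHom R S M f ∘ₗ BalTensor.tmulRight S l = BalTensor.tmulRight (R := R) (M := M) S (f l) :=
  rfl

variable (R S M) in
theorem tensorFunctor_additive : (tensorFunctor R S M).Additive where
  map_add {_ _ f g} := ModuleCat.hom_ext (tensorHom_add f.hom g.hom)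

end TensorHom

section Unit

open BalTensor

variable {A B : Type u} [Ring A] [Ring B]
  {M : Type u} [AddCommGroup M] [Module A M] [Module Bᵐᵒᵖ M] [SMulCommClass A Bᵐᵒᵖ M]
  {N : Type u} [AddCommGroup N] [Module Aᵐᵒᵖ N]
  (e : BalTensor A N M ≃+ B) (heR : ∀ (b : B) (x : BalTensor A N M), e (op b • x) = e x * b)
  {L : Type u} [AddCommGroup L] [Module B L]

include heR in
theorem op_smul_symm_one (b : B) : op b • e.symm 1 = e.symm b :=
  e.injective (by rw [heR, e.apply_symm_apply, e.apply_symm_apply, one_mul])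

def pairingSMul (n : N) : BalTensor B M L →+ L :=
  lift ((smulAddHom B L).comp (e.toAddMonoidHom.comp (tmulAddHom n))) fun m b l => by
    simp [tmulAddHom, ← tmul_smul, heR, mul_smul]

theorem pairingSMul_tmul (n : N) (m : M) (l : L) :
    pairingSMul e heR n (tmul B M L m l) = e (tmul A N M n m) • l :=
  lift_tmul _ _ m l

theorem pairingSMul_add (n n' : N) :
    pairingSMul e heR (L := L) (n + n') = pairingSMul e heR n + pairingSMul e heR n' :=
  addHom_ext fun m l => by simp [pairingSMul_tmul, tmul_add_left, add_smul]

theorem pairingSMul_op_smul (n : N) (a : A) (x : BalTensor B M L) :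
    pairingSMul e heR (op a • n) x = pairingSMul e heR n (a • x) := by
  induction x using induction_on with
  -- `rw [smul_zero]` does not see through the `SMul` instance of `BalTensor`, hence the `show`s.
  | zero => rw [map_zero, show a • (0 : BalTensor B M L) = 0 from smul_zero a, map_zero]
  | tmul m l => rw [smul_tmul, pairingSMul_tmul, pairingSMul_tmul, op_smul_tmul]
  | add x y hx hy =>
    rw [map_add, show a • (x + y) = a • x + a • y from smul_add a x y, map_add, hx, hy]

def contract : BalTensor A N (BalTensor B M L) →+ L :=
  lift (AddMonoidHom.mk' (pairingSMul e heR) (pairingSMul_add e heR)) (pairingSMul_op_smul e heR)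

theorem contract_tmul_tmul (n : N) (m : M) (l : L) :
    contract e heR (tmul A N _ n (tmul B M L m l)) = e (tmul A N M n m) • l :=
  (lift_tmul _ _ n _).trans (pairingSMul_tmul e heR n m l)

variable [Module B N] [SMulCommClass B Aᵐᵒᵖ N]
  (heL : ∀ (b : B) (x : BalTensor A N M), e (b • x) = b * e x)

theorem tensorHom_tmulRight_smul (b : B) (l : L) (x : BalTensor A N M) :
    tensorHom B A N (tmulRight B (b • l)) x = tensorHom B A N (tmulRight B l) (op b • x) := by
  induction x using induction_on with
  | zero => rw [map_zero, show op b • (0 : BalTensor A N M) = 0 from smul_zero _, map_zero]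
  | tmul n m =>
    rw [tmul_smul, tensorHom_tmul, tensorHom_tmul]
    exact congrArg _ (op_smul_tmul m b l).symm
  | add x y hx hy =>
    rw [map_add, show op b • (x + y) = op b • x + op b • y from smul_add _ x y, map_add, hx, hy]

theorem contract_tensorHom_tmulRight (l : L) (x : BalTensor A N M) :
    contract e heR (tensorHom B A N (tmulRight B l) x) = e x • l := by
  induction x using induction_on with
  | zero => rw [map_zero, map_zero, map_zero, zero_smul]
  | tmul n m => rfl
  | add x y hx hy => rw [map_add, map_add, hx, hy, map_add, add_smul]

def insertUnit : L →ₗ[B] BalTensor A N (BalTensor B M L) where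
  toFun l := tensorHom B A N (tmulRight B l) (e.symm 1)
  map_add' l l' := by rw [tmulRight_add, tensorHom_add, LinearMap.add_apply]
  map_smul' b l := by
    have smul_symm_one : b • e.symm 1 = e.symm b :=
      e.injective (by rw [heL, e.apply_symm_apply, e.apply_symm_apply, mul_one])
    rw [tensorHom_tmulRight_smul, op_smul_symm_one e heR, ← smul_symm_one, map_smul]
    rfl

theorem insertUnit_smul (x : BalTensor A N M) (l : L) :
    insertUnit e heR heL (e x • l) = tensorHom B A N (tmulRight B l) x := by
  rw [insertUnit, LinearMap.coe_mk, AddHom.coe_mk, tensorHom_tmulRight_smul,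
    op_smul_symm_one e heR, e.symm_apply_apply]

theorem contract_insertUnit (l : L) : contract e heR (insertUnit e heR heL l) = l := by
  rw [insertUnit, LinearMap.coe_mk, AddHom.coe_mk, contract_tensorHom_tmulRight,
    e.apply_symm_apply, one_smul]

theorem insertUnit_contract (z : BalTensor A N (BalTensor B M L)) :
    insertUnit e heR heL (contract e heR z) = z := by
  induction z using induction_on with
  | zero => rw [map_zero, map_zero]
  | tmul n x =>
    induction x using induction_on with
    | zero => rw [tmul_zero_right, map_zero, map_zero]
    | tmul m l => rw [contract_tmul_tmul, insertUnit_smul, tensorHom_tmul]; rfl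
    | add x y hx hy => rw [tmul_add_right, map_add, map_add, hx, hy]
  | add z z' hz hz' => rw [map_add, map_add, hz, hz']

theorem insertUnit_naturality {L' : Type u} [AddCommGroup L'] [Module B L'] (f : L →ₗ[B] L')
    (l : L) :
    insertUnit e heR heL (f l) = tensorHom B A N (tensorHom A B M f) (insertUnit e heR heL l) := by
  rw [insertUnit, LinearMap.coe_mk, AddHom.coe_mk, ← tensorHom_comp_tmulRight, tensorHom_comp]
  rfl

def equivTensorTensor : L ≃ₗ[B] BalTensor A N (BalTensor B M L) :=
  { insertUnit e heR heL with
    invFun := contract e heR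
    left_inv := contract_insertUnit e heR heL
    right_inv := insertUnit_contract e heR heL }

def tensorFunctorCompIso : 𝟭 (ModuleCat.{u} B) ≅ tensorFunctor A B M ⋙ tensorFunctor B A N :=
  NatIso.ofComponents (fun L => (equivTensorTensor e heR heL (L := L)).toModuleIso) fun f =>
    ModuleCat.hom_ext (LinearMap.ext (insertUnit_naturality e heR heL f.hom))

end Unit

end

end Paper

/-- Let `R, S` be rings, `M` an `(R,S)`-bimodule and `N` an
`(S,R)`-bimodule with an `(R,R)`-bimodule isomorphism `M ⊗[S] N ≅ R` and an
`(S,S)`-bimodule isomorphism `N ⊗[R] M ≅ S`. Then the additive functors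
`G : L ↦ M ⊗[S] L` (from left `S`-modules to left `R`-modules) and
`F : K ↦ N ⊗[R] K` (from left `R`-modules to left `S`-modules) satisfy
`F ∘ G ≅ id` and `G ∘ F ≅ id` naturally; in particular `G` and `F` are mutually
quasi-inverse equivalences of categories. -/
theorem tensor_functors_equivalence
    (R S : Type u) [Ring R] [Ring S]
    (M : Type u) [AddCommGroup M] [Module R M] [Module Sᵐᵒᵖ M] [SMulCommClass R Sᵐᵒᵖ M]
    (N : Type u) [AddCommGroup N] [Module S N] [Module Rᵐᵒᵖ N] [SMulCommClass S Rᵐᵒᵖ N]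
    (eR : BalTensor S M N ≃+ R)
    (eR_left : ∀ (r : R) (x : BalTensor S M N), eR (r • x) = r * eR x)
    (eR_right : ∀ (r : R) (x : BalTensor S M N), eR (op r • x) = eR x * r)
    (eS : BalTensor R N M ≃+ S)
    (eS_left : ∀ (s : S) (x : BalTensor R N M), eS (s • x) = s * eS x)
    (eS_right : ∀ (s : S) (x : BalTensor R N M), eS (op s • x) = eS x * s) :
    (tensorFunctor R S M).Additive ∧ (tensorFunctor S R N).Additive ∧
    Nonempty (tensorFunctor R S M ⋙ tensorFunctor S R N ≅ 𝟭 (ModuleCat.{u} S)) ∧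
    Nonempty (tensorFunctor S R N ⋙ tensorFunctor R S M ≅ 𝟭 (ModuleCat.{u} R)) ∧
    (tensorFunctor R S M).IsEquivalence ∧ (tensorFunctor S R N).IsEquivalence := by
  let unitS := tensorFunctorCompIso eS eS_right eS_left
  let unitR := tensorFunctorCompIso eR eR_right eR_left
  exact ⟨tensorFunctor_additive R S M, tensorFunctor_additive S R N, ⟨unitS.symm⟩, ⟨unitR.symm⟩,
    (CategoryTheory.Equivalence.mk _ _ unitS unitR.symm).isEquivalence_functor,
    (CategoryTheory.Equivalence.mk _ _ unitR unitS.symm).isEquivalence_functor⟩
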